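/- Last-iterate sublinear convergence of PDHG: let {z^k} be the PDHG iterates for the saddle-point formulation of a standard-form LP with step size 0 < s < 1/‖A‖₂, started at z⁰ ∈ Z, and let z* = (x*, y*) ∈ Z* be any saddle point. Then for every k ≥ 1 and every z = (x,y) ∈ Z, L(x^k, y) − L(x, y^k) ≤ (1/√k)·(‖z⁰ − z*‖²_{P_s} + ‖z⁰ − z*‖_{P_s}·‖z* − z‖_{P_s}). -/

import Mathlib

open Matrix Filter

/-- Euclidean norm of a vector in `ℝ^d`. -/
noncomputable def enorm2 {d : ℕ} (x : Fin d → ℝ) : ℝ := Real.sqrt (x ⬝ᵥ x)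

/-- Spectral norm (ℓ₂ operator norm) of a matrix. -/
noncomputable def specNorm {m n : ℕ} (A : Matrix (Fin m) (Fin n) ℝ) : ℝ :=
  sSup {t | ∃ x : Fin n → ℝ, x ⬝ᵥ x ≤ 1 ∧ t = enorm2 (A.mulVec x)}

/-- Componentwise positive part (projection onto the nonnegative orthant). -/
def projPos {d : ℕ} (x : Fin d → ℝ) : Fin d → ℝ := fun i => max (x i) 0

/-- One PDHG iteration with equal primal/dual step size `s`. -/
noncomputable def pdhgT {m n : ℕ} (A : Matrix (Fin m) (Fin n) ℝ) (b : Fin m → ℝ)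
    (c : Fin n → ℝ) (s : ℝ) (z : (Fin n → ℝ) × (Fin m → ℝ)) : (Fin n → ℝ) × (Fin m → ℝ) :=
  let x' := projPos (z.1 + s • Aᵀ.mulVec z.2 - s • c)
  (x', z.2 - s • A.mulVec ((2 : ℝ) • x' - z.1) + s • b)

/-- The Lagrangian `L(x,y) = cᵀx - yᵀAx + bᵀy`. -/
noncomputable def lagr {m n : ℕ} (A : Matrix (Fin m) (Fin n) ℝ) (b : Fin m → ℝ)
    (c : Fin n → ℝ) (x : Fin n → ℝ) (y : Fin m → ℝ) : ℝ :=
  c ⬝ᵥ x - y ⬝ᵥ A.mulVec x + b ⬝ᵥ y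

/-- Membership in `Z = ℝ₊ⁿ × ℝᵐ`. -/
def inZ {m n : ℕ} (z : (Fin n → ℝ) × (Fin m → ℝ)) : Prop := ∀ i, 0 ≤ z.1 i

/-- Saddle point of `L` over `Z`. -/
def isSaddle {m n : ℕ} (A : Matrix (Fin m) (Fin n) ℝ) (b : Fin m → ℝ) (c : Fin n → ℝ)
    (z : (Fin n → ℝ) × (Fin m → ℝ)) : Prop :=
  inZ z ∧ ∀ w : (Fin n → ℝ) × (Fin m → ℝ), inZ w →
    lagr A b c z.1 w.2 ≤ lagr A b c z.1 z.2 ∧ lagr A b c z.1 z.2 ≤ lagr A b c w.1 z.2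

/-- The quadratic form `‖z‖²_{P_s}` induced by `P_s = [[(1/s)I, Aᵀ],[A,(1/s)I]]`. -/
noncomputable def PsSq {m n : ℕ} (A : Matrix (Fin m) (Fin n) ℝ) (s : ℝ)
    (z : (Fin n → ℝ) × (Fin m → ℝ)) : ℝ :=
  (1 / s) * (z.1 ⬝ᵥ z.1 + z.2 ⬝ᵥ z.2) + 2 * (A.mulVec z.1 ⬝ᵥ z.2)

/-- The `P_s` norm. -/
noncomputable def PsNorm {m n : ℕ} (A : Matrix (Fin m) (Fin n) ℝ) (s : ℝ)
    (z : (Fin n → ℝ) × (Fin m → ℝ)) : ℝ := Real.sqrt (PsSq A s z)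

/-- Euclidean norm on the primal-dual pair space. -/
noncomputable def enormP {m n : ℕ} (z : (Fin n → ℝ) × (Fin m → ℝ)) : ℝ :=
  Real.sqrt (z.1 ⬝ᵥ z.1 + z.2 ⬝ᵥ z.2)

/-- Normalized duality gap `ρ_r(z)`. -/
noncomputable def rho {m n : ℕ} (A : Matrix (Fin m) (Fin n) ℝ) (b : Fin m → ℝ)
    (c : Fin n → ℝ) (r : ℝ) (z : (Fin n → ℝ) × (Fin m → ℝ)) : ℝ :=
  (1 / r) * sSup {g | ∃ w : (Fin n → ℝ) × (Fin m → ℝ), inZ w ∧ enormP (w - z) ≤ r ∧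
    g = lagr A b c z.1 w.2 - lagr A b c w.1 z.2}

/-- Euclidean distance to the saddle-point set `Z*`. -/
noncomputable def dist2 {m n : ℕ} (A : Matrix (Fin m) (Fin n) ℝ) (b : Fin m → ℝ)
    (c : Fin n → ℝ) (z : (Fin n → ℝ) × (Fin m → ℝ)) : ℝ :=
  sInf {d | ∃ w, isSaddle A b c w ∧ d = enormP (z - w)}

/-- `P_s`-distance to the saddle-point set `Z*`. -/
noncomputable def distPs {m n : ℕ} (A : Matrix (Fin m) (Fin n) ℝ) (b : Fin m → ℝ)
    (c : Fin n → ℝ) (s : ℝ) (z : (Fin n → ℝ) × (Fin m → ℝ)) : ℝ :=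
  sInf {d | ∃ w, isSaddle A b c w ∧ d = PsNorm A s (z - w)}

/-- `v` is the infimal displacement vector of `T`: the minimum-`P_s`-norm element
of the closure of `range (T - I)`. -/
def isIDV {m n : ℕ} (A : Matrix (Fin m) (Fin n) ℝ) (s : ℝ)
    (T : (Fin n → ℝ) × (Fin m → ℝ) → (Fin n → ℝ) × (Fin m → ℝ))
    (v : (Fin n → ℝ) × (Fin m → ℝ)) : Prop :=
  v ∈ closure {w | ∃ z, w = T z - z} ∧
  ∀ w ∈ closure {w | ∃ z, w = T z - z}, PsNorm A s v ≤ PsNorm A s w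

section Aux
variable {m n : ℕ}

lemma dot_self_nonneg (x : Fin n → ℝ) : 0 ≤ x ⬝ᵥ x :=
  Finset.sum_nonneg fun i _ => mul_self_nonneg (x i)

lemma enorm_nonneg (x : Fin n → ℝ) : 0 ≤ enorm2 x := Real.sqrt_nonneg _

lemma sq_enorm (x : Fin n → ℝ) : enorm2 x ^ 2 = x ⬝ᵥ x :=
  Real.sq_sqrt (dot_self_nonneg x)

lemma enorm2_smul (t : ℝ) (x : Fin n → ℝ) : enorm2 (t • x) = |t| * enorm2 x := by
  unfold enorm2
  rw [smul_dotProduct, dotProduct_smul, smul_eq_mul, smul_eq_mul, ← mul_assoc,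
    Real.sqrt_mul (mul_self_nonneg t), Real.sqrt_mul_self_eq_abs]

lemma dot_cs (x y : Fin n → ℝ) : |x ⬝ᵥ y| ≤ enorm2 x * enorm2 y := by
  have h := Finset.sum_mul_sq_le_sq_mul_sq Finset.univ x y
  have h2 : |x ⬝ᵥ y| ^ 2 ≤ (enorm2 x * enorm2 y) ^ 2 := by
    rw [mul_pow, sq_enorm, sq_enorm, sq_abs]
    simpa [dotProduct, pow_two] using h
  calc |x ⬝ᵥ y| = Real.sqrt (|x ⬝ᵥ y| ^ 2) := (Real.sqrt_sq (abs_nonneg _)).symm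
    _ ≤ Real.sqrt ((enorm2 x * enorm2 y) ^ 2) := Real.sqrt_le_sqrt h2
    _ = enorm2 x * enorm2 y := Real.sqrt_sq (mul_nonneg (enorm_nonneg x) (enorm_nonneg y))

end Aux

section Spec
variable {m n : ℕ} (A : Matrix (Fin m) (Fin n) ℝ)

lemma specSet_mem_zero : (0:ℝ) ∈ {t | ∃ x : Fin n → ℝ, x ⬝ᵥ x ≤ 1 ∧ t = enorm2 (A.mulVec x)} := by
  refine ⟨0, by simp [dotProduct], ?_⟩
  simp [enorm2, dotProduct, Matrix.mulVec_zero]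

lemma specSet_bddAbove :
    BddAbove {t | ∃ x : Fin n → ℝ, x ⬝ᵥ x ≤ 1 ∧ t = enorm2 (A.mulVec x)} := by
  refine ⟨Real.sqrt (∑ i, (fun i => A i ⬝ᵥ A i) i), ?_⟩
  rintro t ⟨x, hx, rfl⟩
  unfold enorm2
  apply Real.sqrt_le_sqrt
  have : A.mulVec x ⬝ᵥ A.mulVec x = ∑ i, (A i ⬝ᵥ x) * (A i ⬝ᵥ x) := by
    simp [dotProduct, Matrix.mulVec]
  rw [this]
  apply Finset.sum_le_sum
  intro i _
  have hcs := dot_cs (A i) x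
  have h1 : |A i ⬝ᵥ x| ^ 2 ≤ (enorm2 (A i) * enorm2 x) ^ 2 := by
    apply pow_le_pow_left₀ (abs_nonneg _) hcs
  have h2 : (enorm2 (A i) * enorm2 x)^2 ≤ A i ⬝ᵥ A i := by
    rw [mul_pow, sq_enorm, sq_enorm]
    calc (A i ⬝ᵥ A i) * (x ⬝ᵥ x) ≤ (A i ⬝ᵥ A i) * 1 :=
          mul_le_mul_of_nonneg_left hx (dot_self_nonneg _)
      _ = A i ⬝ᵥ A i := mul_one _
  calc (A i ⬝ᵥ x) * (A i ⬝ᵥ x) = |A i ⬝ᵥ x| ^ 2 := by rw [sq_abs, pow_two]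
    _ ≤ _ := le_trans h1 h2

lemma specNorm_nonneg : 0 ≤ specNorm A :=
  le_csSup (specSet_bddAbove A) (specSet_mem_zero A)

lemma enorm_mulVec_le (x : Fin n → ℝ) : enorm2 (A.mulVec x) ≤ specNorm A * enorm2 x := by
  rcases eq_or_ne (enorm2 x) 0 with h0 | h0
  · have hx : x = 0 := by
      have : x ⬝ᵥ x = 0 := by
        have := sq_enorm x; rw [h0] at this; simpa using this.symm
      exact dotProduct_self_eq_zero.mp this
    subst hx
    simp [enorm2, dotProduct, Matrix.mulVec_zero]
  · have hpos : 0 < enorm2 x := lt_of_le_of_ne (enorm_nonneg x) (Ne.symm h0)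
    have hmem : enorm2 (A.mulVec ((enorm2 x)⁻¹ • x)) ∈
        {t | ∃ x : Fin n → ℝ, x ⬝ᵥ x ≤ 1 ∧ t = enorm2 (A.mulVec x)} := by
      refine ⟨(enorm2 x)⁻¹ • x, ?_, rfl⟩
      rw [smul_dotProduct, dotProduct_smul, smul_eq_mul, smul_eq_mul, ← mul_assoc]
      have h1 : (enorm2 x)⁻¹ * (enorm2 x)⁻¹ * (x ⬝ᵥ x) = 1 := by
        rw [← sq_enorm x]; field_simp
      rw [h1]
    have hle : enorm2 (A.mulVec ((enorm2 x)⁻¹ • x)) ≤ specNorm A :=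
      le_csSup (specSet_bddAbove A) hmem
    rw [Matrix.mulVec_smul, enorm2_smul, abs_of_pos (inv_pos.mpr hpos)] at hle
    calc enorm2 (A.mulVec x) = enorm2 x * ((enorm2 x)⁻¹ * enorm2 (A.mulVec x)) := by
          field_simp
      _ ≤ enorm2 x * specNorm A := mul_le_mul_of_nonneg_left hle (le_of_lt hpos)
      _ = specNorm A * enorm2 x := mul_comm _ _

end Spec

section PinSec
variable {m n : ℕ} (A : Matrix (Fin m) (Fin n) ℝ) (s : ℝ)

/-- The bilinear form associated with `P_s`. -/
noncomputable def Pin (z w : (Fin n → ℝ) × (Fin m → ℝ)) : ℝ :=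
  (1 / s) * (z.1 ⬝ᵥ w.1 + z.2 ⬝ᵥ w.2) + A.mulVec z.1 ⬝ᵥ w.2 + A.mulVec w.1 ⬝ᵥ z.2

lemma pin_self (z : (Fin n → ℝ) × (Fin m → ℝ)) : Pin A s z z = PsSq A s z := by
  unfold Pin PsSq; ring

lemma psSq_add (a b : (Fin n → ℝ) × (Fin m → ℝ)) :
    PsSq A s (a + b) = PsSq A s a + 2 * Pin A s a b + PsSq A s b := by
  unfold Pin PsSq
  simp only [Prod.fst_add, Prod.snd_add, add_dotProduct, dotProduct_add, Matrix.mulVec_add]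
  rw [dotProduct_comm b.1 a.1, dotProduct_comm b.2 a.2,
    dotProduct_comm (A.mulVec b.1) a.2, dotProduct_comm a.2 (A.mulVec b.1)]
  ring

lemma pin_smul_right (t : ℝ) (z w : (Fin n → ℝ) × (Fin m → ℝ)) :
    Pin A s z (t • w) = t * Pin A s z w := by
  unfold Pin
  simp only [Prod.smul_fst, Prod.smul_snd, dotProduct_smul, smul_dotProduct,
    Matrix.mulVec_smul, smul_eq_mul]
  ring

lemma pin_add_right (z a b : (Fin n → ℝ) × (Fin m → ℝ)) :
    Pin A s z (a + b) = Pin A s z a + Pin A s z b := by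
  unfold Pin
  simp only [Prod.fst_add, Prod.snd_add, dotProduct_add, add_dotProduct, Matrix.mulVec_add]
  ring

lemma pin_comm (z w : (Fin n → ℝ) × (Fin m → ℝ)) : Pin A s z w = Pin A s w z := by
  unfold Pin
  rw [dotProduct_comm z.1 w.1, dotProduct_comm z.2 w.2]
  ring

lemma pin_sub_left (a b w : (Fin n → ℝ) × (Fin m → ℝ)) :
    Pin A s (a - b) w = Pin A s a w - Pin A s b w := by
  unfold Pin
  simp only [Prod.fst_sub, Prod.snd_sub, sub_dotProduct, dotProduct_sub, Matrix.mulVec_sub]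
  ring

lemma psSq_nonneg (hs : 0 < s) (hsA : s * specNorm A < 1)
    (z : (Fin n → ℝ) × (Fin m → ℝ)) : 0 ≤ PsSq A s z := by
  unfold PsSq
  have hN : enorm2 (A.mulVec z.1) ≤ specNorm A * enorm2 z.1 := enorm_mulVec_le A z.1
  have hcs : |A.mulVec z.1 ⬝ᵥ z.2| ≤ enorm2 (A.mulVec z.1) * enorm2 z.2 := dot_cs _ _
  have h1 : (1/s) * ((enorm2 z.1)^2 + (enorm2 z.2)^2) = (1/s) * (z.1 ⬝ᵥ z.1 + z.2 ⬝ᵥ z.2) := by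
    rw [sq_enorm, sq_enorm]
  have hNs : specNorm A < 1 / s := by
    rw [lt_div_iff₀ hs]; linarith [hsA]
  have ha := enorm_nonneg z.1
  have hb := enorm_nonneg z.2
  have hN0 := specNorm_nonneg A
  have habs : -(A.mulVec z.1 ⬝ᵥ z.2) ≤ specNorm A * enorm2 z.1 * enorm2 z.2 := by
    have := neg_abs_le (A.mulVec z.1 ⬝ᵥ z.2)
    nlinarith [mul_le_mul_of_nonneg_right hN hb]
  nlinarith [sq_nonneg (enorm2 z.1 - enorm2 z.2), mul_le_mul_of_nonneg_right hNs.le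
    (add_nonneg (sq_nonneg (enorm2 z.1)) (sq_nonneg (enorm2 z.2)))]

lemma pin_cs (hs : 0 < s) (hsA : s * specNorm A < 1)
    (z w : (Fin n → ℝ) × (Fin m → ℝ)) :
    Pin A s z w ≤ PsNorm A s z * PsNorm A s w := by
  have key : ∀ t : ℝ, 0 ≤ PsSq A s w * (t * t) + (2 * Pin A s z w) * t + PsSq A s z := by
    intro t
    have h := psSq_nonneg A s hs hsA (z + t • w)
    rw [psSq_add, pin_smul_right] at h
    have hw : PsSq A s (t • w) = (t*t) * PsSq A s w := by
      have : (t • w) = t • w := rfl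
      unfold PsSq
      simp only [Prod.smul_fst, Prod.smul_snd, dotProduct_smul, smul_dotProduct,
        Matrix.mulVec_smul, smul_eq_mul]
      ring
    rw [hw] at h
    nlinarith [h]
  have hd := discrim_le_zero key
  unfold discrim at hd
  have hsq : (Pin A s z w)^2 ≤ PsSq A s z * PsSq A s w := by nlinarith [hd]
  have h1 : Pin A s z w ≤ |Pin A s z w| := le_abs_self _
  have h2 : |Pin A s z w| = Real.sqrt ((Pin A s z w)^2) := (Real.sqrt_sq_eq_abs _).symm
  calc Pin A s z w ≤ Real.sqrt ((Pin A s z w)^2) := by rw [← h2]; exact h1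
    _ ≤ Real.sqrt (PsSq A s z * PsSq A s w) := Real.sqrt_le_sqrt hsq
    _ = PsNorm A s z * PsNorm A s w := by
        unfold PsNorm; rw [Real.sqrt_mul (psSq_nonneg A s hs hsA z)]

end PinSec

section Key
variable {m n : ℕ} (A : Matrix (Fin m) (Fin n) ℝ) (b : Fin m → ℝ) (c : Fin n → ℝ) (s : ℝ)

lemma proj_ineq (v u : Fin n → ℝ) (hu : ∀ i, 0 ≤ u i) :
    0 ≤ (u - projPos v) ⬝ᵥ (projPos v - v) := by
  apply Finset.sum_nonneg
  intro i _
  simp only [Pi.sub_apply, projPos]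
  rcases le_or_gt (v i) 0 with h | h
  · rw [max_eq_right h]
    have := hu i
    nlinarith
  · rw [max_eq_left h.le]
    simp

lemma inZ_pdhgT (z : (Fin n → ℝ) × (Fin m → ℝ)) : inZ (pdhgT A b c s z) := by
  intro i
  simp only [pdhgT, projPos]
  exact le_max_right _ _

lemma dot_transpose (p : Fin n → ℝ) (q : Fin m → ℝ) :
    p ⬝ᵥ Aᵀ.mulVec q = A.mulVec p ⬝ᵥ q := by
  rw [Matrix.mulVec_transpose, dotProduct_comm, ← Matrix.dotProduct_mulVec,
    dotProduct_comm]

lemma keyVI (hs : 0 < s) (zc w : (Fin n → ℝ) × (Fin m → ℝ)) (hw : inZ w) :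
    lagr A b c (pdhgT A b c s zc).1 w.2 - lagr A b c w.1 (pdhgT A b c s zc).2 ≤
      Pin A s (zc - pdhgT A b c s zc) (pdhgT A b c s zc - w) := by
  obtain ⟨x, y⟩ := zc
  obtain ⟨u, v⟩ := w
  have hu : ∀ i, 0 ≤ u i := hw
  set x' := projPos (x + s • Aᵀ.mulVec y - s • c) with hx'
  have hT : pdhgT A b c s (x, y) = (x', y - s • A.mulVec ((2:ℝ) • x' - x) + s • b) := rfl
  set y' := y - s • A.mulVec ((2:ℝ) • x' - x) + s • b with hy'
  have hP : 0 ≤ (u - x') ⬝ᵥ (x' - (x + s • Aᵀ.mulVec y - s • c)) :=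
    proj_ineq _ _ hu
  rw [hT]
  have hiden :
      Pin A s ((x, y) - (x', y')) ((x', y') - (u, v))
        - (lagr A b c x' v - lagr A b c u y')
      = (1/s) * ((u - x') ⬝ᵥ (x' - (x + s • Aᵀ.mulVec y - s • c))) := by
    unfold Pin lagr
    simp only [Prod.fst_sub, Prod.snd_sub, hy']
    simp only [Matrix.mulVec_sub, Matrix.mulVec_add, Matrix.mulVec_smul,
      sub_dotProduct, dotProduct_sub, add_dotProduct, dotProduct_add,
      smul_dotProduct, dotProduct_smul, smul_eq_mul]
    simp only [dot_transpose A, dotProduct_comm u c, dotProduct_comm x' c,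
      dotProduct_comm u x, dotProduct_comm u x', dotProduct_comm x' x,
      dotProduct_comm v (A.mulVec x'), dotProduct_comm v (A.mulVec x),
      dotProduct_comm v (A.mulVec u),
      dotProduct_comm y (A.mulVec u), dotProduct_comm y (A.mulVec x'),
      dotProduct_comm y (A.mulVec x),
      dotProduct_comm b (A.mulVec x'), dotProduct_comm b (A.mulVec x),
      dotProduct_comm b (A.mulVec u),
      dotProduct_comm (A.mulVec x) (A.mulVec x'),
      dotProduct_comm (A.mulVec u) (A.mulVec x'),
      dotProduct_comm (A.mulVec u) (A.mulVec x),
      dotProduct_comm y b, dotProduct_comm y v, dotProduct_comm v b]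
    field_simp
    ring_nf
  have h1s : 0 < 1/s := by positivity
  nlinarith [mul_nonneg h1s.le hP, hiden]

end Key

section Mono
variable {m n : ℕ} (A : Matrix (Fin m) (Fin n) ℝ) (b : Fin m → ℝ) (c : Fin n → ℝ) (s : ℝ)

lemma pin_mono (hs : 0 < s) (zc wc : (Fin n → ℝ) × (Fin m → ℝ)) :
    0 ≤ Pin A s ((zc - pdhgT A b c s zc) - (wc - pdhgT A b c s wc))
      (pdhgT A b c s zc - pdhgT A b c s wc) := by
  have h1 := keyVI A b c s hs zc (pdhgT A b c s wc) (inZ_pdhgT A b c s wc)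
  have h2 := keyVI A b c s hs wc (pdhgT A b c s zc) (inZ_pdhgT A b c s zc)
  have hneg : Pin A s (wc - pdhgT A b c s wc) (pdhgT A b c s wc - pdhgT A b c s zc)
      = - Pin A s (wc - pdhgT A b c s wc) (pdhgT A b c s zc - pdhgT A b c s wc) := by
    rw [show pdhgT A b c s wc - pdhgT A b c s zc
        = (-1 : ℝ) • (pdhgT A b c s zc - pdhgT A b c s wc) by
      rw [neg_one_smul, neg_sub], pin_smul_right]
    ring
  rw [hneg] at h2
  rw [pin_sub_left]
  linarith

lemma pin_saddle (hs : 0 < s) (zst : (Fin n → ℝ) × (Fin m → ℝ))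
    (hzst : isSaddle A b c zst) (zc : (Fin n → ℝ) × (Fin m → ℝ)) :
    0 ≤ Pin A s (zc - pdhgT A b c s zc) (pdhgT A b c s zc - zst) := by
  have h1 := keyVI A b c s hs zc zst hzst.1
  have h2 := hzst.2 (pdhgT A b c s zc) (inZ_pdhgT A b c s zc)
  linarith [h2.1, h2.2]

lemma psSq_split (a bb : (Fin n → ℝ) × (Fin m → ℝ)) (h : 0 ≤ Pin A s a bb) :
    PsSq A s bb + PsSq A s a ≤ PsSq A s (a + bb) := by
  rw [psSq_add]
  linarith

end Mono


/-- **Last-iterate sublinear convergence of PDHG** (Theorem 2):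
for step size `0 < s < 1/‖A‖₂` and any saddle point `z*`, for every `k ≥ 1` and
`z = (x,y) ∈ Z`, `L(xᵏ, y) − L(x, yᵏ) ≤ (1/√k)(‖z⁰−z*‖²_{P_s} + ‖z⁰−z*‖_{P_s}‖z*−z‖_{P_s})`. -/
theorem pdhg_last_iterate_convergence {m n : ℕ} (A : Matrix (Fin m) (Fin n) ℝ)
    (b : Fin m → ℝ) (c : Fin n → ℝ) (s : ℝ) (hs : 0 < s) (hsA : s * specNorm A < 1)
    (zst : (Fin n → ℝ) × (Fin m → ℝ)) (hzst : isSaddle A b c zst)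
    (z : ℕ → (Fin n → ℝ) × (Fin m → ℝ)) (hz0 : inZ (z 0))
    (hz : ∀ k, z (k + 1) = pdhgT A b c s (z k)) :
    ∀ k : ℕ, 1 ≤ k → ∀ w : (Fin n → ℝ) × (Fin m → ℝ), inZ w →
      lagr A b c (z k).1 w.2 - lagr A b c w.1 (z k).2
        ≤ (1 / Real.sqrt (k : ℝ)) *
          (PsSq A s (z 0 - zst) + PsNorm A s (z 0 - zst) * PsNorm A s (zst - w)) := by
  intro k hk w hw
  set q0 : ℝ := PsSq A s (z 0 - zst) with hq0def
  have hq0 : 0 ≤ q0 := psSq_nonneg A s hs hsA _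
  -- one-step decrease towards the saddle point
  have hdec : ∀ j, PsSq A s (z (j+1) - zst) + PsSq A s (z j - z (j+1))
      ≤ PsSq A s (z j - zst) := by
    intro j
    have hp := pin_saddle A b c s hs zst hzst (z j)
    rw [← hz j] at hp
    have := psSq_split A s (z j - z (j+1)) (z (j+1) - zst) hp
    rwa [sub_add_sub_cancel] at this
  -- difference decrease
  have hdd : ∀ j, PsSq A s (z (j+1) - z (j+2)) ≤ PsSq A s (z j - z (j+1)) := by
    intro j
    have hp := pin_mono A b c s hs (z j) (z (j+1))
    rw [← hz j, ← hz (j+1)] at hp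
    have h2 := psSq_split A s ((z j - z (j+1)) - (z (j+1) - z (j+2)))
      (z (j+1) - z (j+2)) hp
    rw [sub_add_cancel] at h2
    have h3 := psSq_nonneg A s hs hsA ((z j - z (j+1)) - (z (j+1) - z (j+2)))
    linarith
  have hddle : ∀ j l, j ≤ l → PsSq A s (z l - z (l+1)) ≤ PsSq A s (z j - z (j+1)) := by
    intro j l hjl
    induction l, hjl using Nat.le_induction with
    | base => exact le_refl _
    | succ l hjl ih => exact le_trans (hdd l) ih
  -- telescoping sum
  have hsum : ∀ k : ℕ, PsSq A s (z k - zst)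
      + ∑ j ∈ Finset.range k, PsSq A s (z j - z (j+1)) ≤ q0 := by
    intro k
    induction k with
    | zero => simp [hq0def]
    | succ k ih =>
      rw [Finset.sum_range_succ]
      have := hdec k
      linarith
  have hzk_le : PsSq A s (z k - zst) ≤ q0 := by
    have h := hsum k
    have : 0 ≤ ∑ j ∈ Finset.range k, PsSq A s (z j - z (j+1)) :=
      Finset.sum_nonneg fun j _ => psSq_nonneg A s hs hsA _
    linarith
  have hkpos : (0:ℝ) < (k:ℝ) := by exact_mod_cast hk
  -- k * q(Δ_{k-1}) ≤ q0
  obtain ⟨k', rfl⟩ : ∃ k', k = k' + 1 := ⟨k - 1, (Nat.succ_pred_eq_of_pos hk).symm⟩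
  have hkq : ((k'+1:ℕ):ℝ) * PsSq A s (z k' - z (k'+1)) ≤ q0 := by
    have h1 : ∑ j ∈ Finset.range (k'+1), PsSq A s (z k' - z (k'+1))
        ≤ ∑ j ∈ Finset.range (k'+1), PsSq A s (z j - z (j+1)) := by
      apply Finset.sum_le_sum
      intro j hj
      exact hddle j k' (Nat.lt_succ_iff.mp (Finset.mem_range.mp hj))
    rw [Finset.sum_const, Finset.card_range, nsmul_eq_mul] at h1
    have h2 := hsum (k'+1)
    have h3 := psSq_nonneg A s hs hsA (z (k'+1) - zst)
    push_cast
    push_cast at h1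
    linarith
  -- key VI at step k
  have hgap := keyVI A b c s hs (z k') w hw
  rw [← hz k'] at hgap
  have hsplit : z (k'+1) - w = (z (k'+1) - zst) + (zst - w) := (sub_add_sub_cancel _ _ _).symm
  rw [hsplit, pin_add_right] at hgap
  have hcs1 := pin_cs A s hs hsA (z k' - z (k'+1)) (z (k'+1) - zst)
  have hcs2 := pin_cs A s hs hsA (z k' - z (k'+1)) (zst - w)
  set a : ℝ := PsNorm A s (z k' - z (k'+1)) with ha
  set B1 : ℝ := PsNorm A s (z (k'+1) - zst) with hB1
  set C : ℝ := PsNorm A s (zst - w) with hC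
  set r0 : ℝ := PsNorm A s (z 0 - zst) with hr0
  have hr0q : r0 * r0 = q0 := Real.mul_self_sqrt hq0
  have hr0n : 0 ≤ r0 := Real.sqrt_nonneg _
  have hCn : 0 ≤ C := Real.sqrt_nonneg _
  have han : 0 ≤ a := Real.sqrt_nonneg _
  have hB1n : 0 ≤ B1 := Real.sqrt_nonneg _
  set sk : ℝ := Real.sqrt ((k'+1:ℕ):ℝ) with hsk
  have hskpos : 0 < sk := Real.sqrt_pos.mpr hkpos
  have hB1r0 : B1 ≤ r0 := Real.sqrt_le_sqrt hzk_le
  have hask : a ≤ r0 / sk := by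
    have hq : PsSq A s (z k' - z (k'+1)) ≤ q0 / ((k'+1:ℕ):ℝ) := by
      rw [le_div_iff₀ hkpos]
      linarith [hkq]
    calc a ≤ Real.sqrt (q0 / ((k'+1:ℕ):ℝ)) := Real.sqrt_le_sqrt hq
      _ = r0 / sk := by rw [Real.sqrt_div hq0]; rfl
  have hm1 : a * B1 ≤ (r0 / sk) * r0 :=
    mul_le_mul hask hB1r0 hB1n (div_nonneg hr0n hskpos.le)
  have hm2 : a * C ≤ (r0 / sk) * C := mul_le_mul_of_nonneg_right hask hCn
  have heq : (r0 / sk) * r0 + (r0 / sk) * C = (1 / sk) * (q0 + r0 * C) := by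
    rw [← hr0q]; field_simp
  calc lagr A b c (z (k'+1)).1 w.2 - lagr A b c w.1 (z (k'+1)).2
      ≤ a * B1 + a * C := le_trans hgap (by linarith [hcs1, hcs2])
    _ ≤ (1 / sk) * (q0 + r0 * C) := by linarith
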